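/- Let A be an n×n real SPSD matrix with SPSD square root A^{1/2}, and let P̄ be an n×n orthogonal projector (P̄ = P̄ᵀ = P̄²). Then ‖A − A^{1/2}P̄A^{1/2}‖_F = ‖(I − P̄)A(I − P̄)‖_F ≤ ‖(I − P̄)A‖_F. -/

import Mathlib

open Matrix BigOperators

/-- The positive semidefinite square root of a positive semidefinite matrix
(the definition removed from Mathlib, restored with its old body). -/
noncomputable def Matrix.PosSemidef.sqrt {n 𝕜 : Type*} [Fintype n] [RCLike 𝕜] [PartialOrder 𝕜]
    [DecidableEq n] {A : Matrix n n 𝕜} (hA : A.PosSemidef) : Matrix n n 𝕜 :=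
  hA.1.eigenvectorUnitary.1 * diagonal ((↑) ∘ (√·) ∘ hA.1.eigenvalues) *
  (star hA.1.eigenvectorUnitary : Matrix n n 𝕜)

/-- `M = U * diagonal μ * Uᵀ` is a spectral (eigen)decomposition of the symmetric matrix `M`,
with orthogonal `U` and eigenvalues `μ` listed in nonincreasing order. -/
def IsSpectralDecomp {n : ℕ} (M U : Matrix (Fin n) (Fin n) ℝ) (μ : Fin n → ℝ) : Prop :=
  Uᵀ * U = 1 ∧ Antitone μ ∧ M = U * Matrix.diagonal μ * Uᵀ

/-- Truncation of a spectral decomposition to its `k` largest (first `k`) eigenvalues: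
the best rank-`k` approximation `M_(k)` associated with the decomposition `(U, μ)`. -/
noncomputable def trunc {n : ℕ} (k : ℕ) (U : Matrix (Fin n) (Fin n) ℝ) (μ : Fin n → ℝ) :
    Matrix (Fin n) (Fin n) ℝ :=
  U * Matrix.diagonal (fun i : Fin n => if (i : ℕ) < k then μ i else 0) * Uᵀ

/-- `f` is operator monotone on SPSD matrices: for all `m` and all `m × m` SPSD matrices
`B ⪰ C ⪰ 0`, one has `f(B) ⪰ f(C)`, where matrix functions are computed through (any)
spectral decomposition. -/
def OperatorMonotone (f : ℝ → ℝ) : Prop :=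
  ∀ (m : ℕ) (B C U V : Matrix (Fin m) (Fin m) ℝ) (β γ : Fin m → ℝ),
    IsSpectralDecomp B U β → IsSpectralDecomp C V γ →
    B.PosSemidef → C.PosSemidef → (B - C).PosSemidef →
    (U * Matrix.diagonal (f ∘ β) * Uᵀ - V * Matrix.diagonal (f ∘ γ) * Vᵀ).PosSemidef

/-- Squared Frobenius norm `‖M‖_F² = Σ_{i,j} M_{ij}²`. -/
noncomputable def frobSq {m l : ℕ} (M : Matrix (Fin m) (Fin l) ℝ) : ℝ :=
  ∑ i, ∑ j, (M i j) ^ 2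

/-- Frobenius norm. -/
noncomputable def frobNorm {m l : ℕ} (M : Matrix (Fin m) (Fin l) ℝ) : ℝ :=
  Real.sqrt (frobSq M)

/-- The eigenvalues of a Hermitian matrix listed in nonincreasing order:
`eigsDesc hM i` is the `(i+1)`-st largest eigenvalue of `M`. -/
noncomputable def eigsDesc {m : ℕ} {M : Matrix (Fin m) (Fin m) ℝ} (hM : M.IsHermitian) :
    Fin m → ℝ :=
  fun i => (hM.eigenvalues ∘ Tuple.sort hM.eigenvalues) i.rev

/-- The singular values of `M` in nonincreasing order: `svDesc M i` is the `(i+1)`-st largest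
singular value of `M`, i.e. the square root of the `(i+1)`-st largest eigenvalue of `MᴴM`. -/
noncomputable def svDesc {m l : ℕ} (M : Matrix (Fin m) (Fin l) ℝ) : Fin l → ℝ :=
  fun i => Real.sqrt (eigsDesc (Matrix.isHermitian_conjTranspose_mul_self M) i)

/-- Nuclear norm: the sum of the singular values. -/
noncomputable def nuclearNorm {m l : ℕ} (M : Matrix (Fin m) (Fin l) ℝ) : ℝ :=
  ∑ i, svDesc M i

/-- Operator (spectral) norm: the largest singular value. -/
noncomputable def opNorm {m l : ℕ} (M : Matrix (Fin m) (Fin l) ℝ) : ℝ :=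
  ⨆ i, svDesc M i

/-- `p`-th power of the Schatten `p`-norm: `‖M‖_(p)^p = Σᵢ σᵢ(M)^p`. -/
noncomputable def schattenPow {m l : ℕ} (p : ℝ) (M : Matrix (Fin m) (Fin l) ℝ) : ℝ :=
  ∑ i, svDesc M i ^ p

/-- Schatten `p`-norm: `‖M‖_(p) = (Σᵢ σᵢ(M)^p)^(1/p)`. -/
noncomputable def schattenNorm {m l : ℕ} (p : ℝ) (M : Matrix (Fin m) (Fin l) ℝ) : ℝ :=
  (schattenPow p M) ^ (1 / p)

/-- `P` is the orthogonal projection onto the column space of `M`. -/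
def IsOrthProjOnto {m l : ℕ} (P : Matrix (Fin m) (Fin m) ℝ) (M : Matrix (Fin m) (Fin l) ℝ) :
    Prop :=
  Pᵀ = P ∧ P * P = P ∧ P * M = M ∧ ∃ Y : Matrix (Fin l) (Fin m) ℝ, P = M * Y

/-! Put `Q = 1 - P̄` and `S = A^{1/2}`. Then `A - S P̄ S = S Q S = (QS)ᵀ(QS)` while
`QAQ = (QS)(QS)ᵀ`, and `XᵀX`, `XXᵀ` have the same Frobenius norm by cyclicity of the trace.
For the inequality, right multiplication by the complementary projections `Q` and `P̄` splits
`QA` orthogonally as `QAQ + QAP̄`, so `‖QA‖_F² = ‖QAQ‖_F² + ‖QAP̄‖_F²`. -/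

namespace Matrix.PosSemidef

variable {ι : Type*} [Fintype ι] [DecidableEq ι] {A : Matrix ι ι ℝ}

lemma transpose_sqrt (hA : A.PosSemidef) : hA.sqrtᵀ = hA.sqrt := by
  simp only [sqrt, transpose_mul, star_eq_conjTranspose, conjTranspose_eq_transpose_of_trivial,
    transpose_transpose, diagonal_transpose, mul_assoc]

lemma sqrt_mul_sqrt (hA : A.PosSemidef) : hA.sqrt * hA.sqrt = A := by
  set U : Matrix ι ι ℝ := hA.1.eigenvectorUnitary.1
  set D : Matrix ι ι ℝ := diagonal ((RCLike.ofReal : ℝ → ℝ) ∘ (√·) ∘ hA.1.eigenvalues)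
  have hU : star U * U = 1 := Unitary.coe_star_mul_self _
  have hD : D * D = diagonal ((RCLike.ofReal : ℝ → ℝ) ∘ hA.1.eigenvalues) := by
    rw [diagonal_mul_diagonal]
    congr 1
    funext i
    exact Real.mul_self_sqrt (hA.eigenvalues_nonneg i)
  calc hA.sqrt * hA.sqrt = U * D * (star U * U) * D * star U := by simp only [sqrt, U, D, mul_assoc]
    _ = U * (D * D) * star U := by rw [hU, mul_one, mul_assoc U]
    _ = A := by
      rw [hD]
      conv_rhs => rw [hA.1.spectral_theorem, Unitary.conjStarAlgAut_apply]

end Matrix.PosSemidef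

section Frobenius

variable {m l : ℕ}

lemma frobSq_eq_trace (M : Matrix (Fin m) (Fin l) ℝ) : frobSq M = (Mᵀ * M).trace := by
  simp only [frobSq, trace, diag, mul_apply, transpose_apply, sq]
  exact Finset.sum_comm

lemma frobSq_transpose_mul_self (X : Matrix (Fin m) (Fin l) ℝ) :
    frobSq (Xᵀ * X) = frobSq (X * Xᵀ) := by
  simp only [frobSq_eq_trace, transpose_mul, transpose_transpose]
  rw [← Matrix.mul_assoc, trace_mul_comm]
  simp only [Matrix.mul_assoc]

lemma frobSq_mul_eq_trace_of_symm_idem {P : Matrix (Fin l) (Fin l) ℝ} (hP : Pᵀ = P)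
    (hPP : IsIdempotentElem P) (M : Matrix (Fin m) (Fin l) ℝ) :
    frobSq (M * P) = (Mᵀ * M * P).trace := by
  rw [frobSq_eq_trace, transpose_mul, hP, Matrix.mul_assoc, trace_mul_comm]
  simp only [Matrix.mul_assoc, hPP.eq]

lemma frobSq_eq_frobSq_mul_add_frobSq_mul_one_sub {P : Matrix (Fin l) (Fin l) ℝ}
    (hP : Pᵀ = P) (hPP : IsIdempotentElem P) (M : Matrix (Fin m) (Fin l) ℝ) :
    frobSq M = frobSq (M * P) + frobSq (M * (1 - P)) := by
  have hQ : (1 - P)ᵀ = 1 - P := by rw [transpose_sub, transpose_one, hP]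
  rw [frobSq_mul_eq_trace_of_symm_idem hP hPP, frobSq_mul_eq_trace_of_symm_idem hQ hPP.one_sub, ← trace_add,
    ← mul_add, add_sub_cancel, mul_one, frobSq_eq_trace]

lemma frobSq_nonneg (M : Matrix (Fin m) (Fin l) ℝ) : 0 ≤ frobSq M :=
  Finset.sum_nonneg fun _ _ => Finset.sum_nonneg fun _ _ => sq_nonneg _

end Frobenius

/-- For SPSD `A` and an orthogonal projector `P̄`,
`‖A − A^{1/2}P̄A^{1/2}‖_F = ‖(I − P̄)A(I − P̄)‖_F ≤ ‖(I − P̄)A‖_F`. -/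
theorem symmetric_compression_error
    (n : ℕ) (A Pbar : Matrix (Fin n) (Fin n) ℝ) (hA : A.PosSemidef)
    (hPbarSymm : Pbarᵀ = Pbar) (hPbarIdem : Pbar * Pbar = Pbar) :
    frobNorm (A - hA.sqrt * Pbar * hA.sqrt) = frobNorm ((1 - Pbar) * A * (1 - Pbar)) ∧
    frobNorm ((1 - Pbar) * A * (1 - Pbar)) ≤ frobNorm ((1 - Pbar) * A) := by
  set S := hA.sqrt
  set Q : Matrix (Fin n) (Fin n) ℝ := 1 - Pbar
  have hQ : Qᵀ = Q := by rw [transpose_sub, transpose_one, hPbarSymm]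
  have hQQ : Q * Q = Q := IsIdempotentElem.one_sub hPbarIdem
  have hS : Sᵀ = S := hA.transpose_sqrt
  have hSS : S * S = A := hA.sqrt_mul_sqrt
  have hcompression : A - S * Pbar * S = (Q * S)ᵀ * (Q * S) :=
    calc A - S * Pbar * S = S * Q * S := by simp only [Q, mul_sub, sub_mul, mul_one, hSS]
      _ = (Q * S)ᵀ * (Q * S) := by rw [transpose_mul, hS, hQ, ← mul_assoc, mul_assoc S Q Q, hQQ]
  have hsandwich : Q * A * Q = Q * S * (Q * S)ᵀ := by
    rw [transpose_mul, hS, hQ, ← hSS]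
    simp only [mul_assoc]
  refine ⟨by rw [frobNorm, frobNorm, hcompression, hsandwich, frobSq_transpose_mul_self], ?_⟩
  apply Real.sqrt_le_sqrt
  rw [frobSq_eq_frobSq_mul_add_frobSq_mul_one_sub (M := Q * A) hPbarSymm hPbarIdem]
  linarith [frobSq_nonneg (Q * A * Pbar)]
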